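/- Fix α > 1. For every source class (p_θ)_{θ∈Θ} on 𝒳^ℓ, the minimax batch α-regret is bounded below by the conditional Sibson capacity: min over batch predictors p̂ of sup_{θ∈Θ} R_α(p̂,θ) ≥ sup over prior probability measures w on Θ of I_α^w(θ,Y|X^n). -/

import Mathlib

/-!
Write `A(x,y) = ∫ p_θ(x^n) p_θ(y)^α w(dθ)`. For each `x^n`, Jensen's inequality for `t ↦ t^α`
with weights `p̂(·|x^n)` gives `(Σ_y A(x,y)^{1/α})^α ≤ Σ_y A(x,y) p̂(y|x^n)^{1-α}`. Summed over
`x^n`, the right-hand side is the `w`-average of `exp((α-1) R_α(p̂,θ))`, hence at most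
`exp((α-1) C)`; taking `(α-1)⁻¹ log` gives the bound on the Sibson information.
-/

open MeasureTheory Real Filter

/-- `q` is a probability mass function on the finite type `B`. -/
def IsPMF {B : Type*} [Fintype B] (q : B → ℝ) : Prop :=
  (∀ y, 0 ≤ q y) ∧ ∑ y, q y = 1

/-- Probability of a tuple of `n` i.i.d. batches: `p_θ(x^n) = ∏ i, p_θ(x_i)`. -/
def prodP {Θ B : Type*} (p : Θ → B → ℝ) (n : ℕ) (θ : Θ) (x : Fin n → B) : ℝ :=
  ∏ i, p θ (x i)

/-- The batch `α`-regret
`R_α(p̂,θ) = (1/(α-1)) log ( Σ_{x^n} p_θ(x^n) Σ_y p_θ(y) (p_θ(y)/p̂(y|x^n))^(α-1) )`. -/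
noncomputable def alphaRegret {Θ B : Type*} [Fintype B] (α : ℝ) (p : Θ → B → ℝ) (n : ℕ)
    (phat : (Fin n → B) → B → ℝ) (θ : Θ) : ℝ :=
  (α - 1)⁻¹ * Real.log (∑ x : Fin n → B, prodP p n θ x *
    ∑ y : B, p θ y * (p θ y / phat x y) ^ (α - 1))

/-- The conditional Rényi divergence `D_α(Y ‖ Ŷ | θ, X^n)` under the joint law
`w(dθ) p_θ(x^n) p_θ(y)`. -/
noncomputable def condRenyiDiv {Θ B : Type*} [MeasurableSpace Θ] [Fintype B] (α : ℝ)
    (p : Θ → B → ℝ) (n : ℕ) (w : Measure Θ) (phat : (Fin n → B) → B → ℝ) : ℝ :=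
  (α - 1)⁻¹ * Real.log (∫ θ, (∑ x : Fin n → B, prodP p n θ x *
    ∑ y : B, p θ y * (p θ y / phat x y) ^ (α - 1)) ∂w)

/-- The conditional Sibson mutual information
`I_α^w(θ,Y|X^n) = (1/(α-1)) log Σ_{x^n} { Σ_y ( ∫ p_θ(x^n) p_θ(y)^α w(dθ) )^(1/α) }^α`. -/
noncomputable def sibsonMI {Θ B : Type*} [MeasurableSpace Θ] [Fintype B] (α : ℝ)
    (p : Θ → B → ℝ) (n : ℕ) (w : Measure Θ) : ℝ :=
  (α - 1)⁻¹ * Real.log (∑ x : Fin n → B,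
    (∑ y : B, (∫ θ, prodP p n θ x * p θ y ^ α ∂w) ^ α⁻¹) ^ α)

/-- Integral of `g` against the posterior `w(dθ|x^n) = w(dθ) p_θ(x^n) / ∫ p_θ'(x^n) w(dθ')`. -/
noncomputable def posteriorInt {Θ B : Type*} [MeasurableSpace Θ] (p : Θ → B → ℝ) (n : ℕ)
    (w : Measure Θ) (x : Fin n → B) (g : Θ → ℝ) : ℝ :=
  (∫ θ, prodP p n θ x * g θ ∂w) / (∫ θ, prodP p n θ x ∂w)

/-- The conditional `α`-NML predictor
`p̂_α(y|x^n) = ( ∫ p_θ(y)^α w(dθ|x^n) )^(1/α) / Σ_y' ( ∫ p_θ(y')^α w(dθ|x^n) )^(1/α)`. -/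
noncomputable def alphaNML {Θ B : Type*} [MeasurableSpace Θ] [Fintype B] (α : ℝ)
    (p : Θ → B → ℝ) (n : ℕ) (w : Measure Θ) (x : Fin n → B) (y : B) : ℝ :=
  (posteriorInt p n w x fun θ => p θ y ^ α) ^ α⁻¹ /
    ∑ y' : B, (posteriorInt p n w x fun θ => p θ y' ^ α) ^ α⁻¹

theorem mul_div_rpow_sub_one {a b α : ℝ} (ha : 0 ≤ a) (hb : 0 ≤ b) (hα : α ≠ 0) :
    a * (a / b) ^ (α - 1) = a ^ α / b ^ (α - 1) := by
  rw [Real.div_rpow ha hb, mul_div_assoc', ← Real.rpow_one_add' ha (by simpa using hα),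
    add_sub_cancel]

theorem le_exp_of_inv_mul_log_le {a T C : ℝ} (ha : 0 < a) (h : a⁻¹ * Real.log T ≤ C) :
    T ≤ Real.exp (a * C) :=
  (Real.le_exp_log T).trans (Real.exp_le_exp.2 ((inv_mul_le_iff₀ ha).1 h))

theorem inv_mul_log_le_of_le_exp {a T C : ℝ} (ha : 0 < a) (hT : 0 < T)
    (h : T ≤ Real.exp (a * C)) : a⁻¹ * Real.log T ≤ C :=
  (inv_mul_le_iff₀ ha).2 ((Real.log_le_iff_le_exp hT).2 h)

section FiniteSums

variable {X B : Type*} [Fintype X] [Fintype B]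

theorem IsPMF.le_one {q : B → ℝ} (hq : IsPMF q) (y : B) : q y ≤ 1 :=
  hq.2 ▸ Finset.single_le_sum (fun z _ => hq.1 z) (Finset.mem_univ y)

theorem IsPMF.exists_pos {q : B → ℝ} (hq : IsPMF q) : ∃ y, 0 < q y := by
  obtain ⟨y, -, hy⟩ := Finset.exists_lt_of_sum_lt (s := Finset.univ) (f := fun _ => (0 : ℝ))
    (g := q) (by simp [hq.2])
  exact ⟨y, hy⟩

theorem rpow_sum_rpow_inv_le_sum_div_rpow {α : ℝ} (hα : 1 ≤ α) {A q : B → ℝ}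
    (hA : ∀ y, 0 ≤ A y) (hq : ∀ y, 0 < q y) (hq1 : ∑ y, q y = 1) :
    (∑ y, A y ^ α⁻¹) ^ α ≤ ∑ y, A y / q y ^ (α - 1) := by
  have hα0 : α ≠ 0 := by linarith
  have hmean : ∑ y, A y ^ α⁻¹ = ∑ y, q y * (A y ^ α⁻¹ / q y) :=
    Finset.sum_congr rfl fun y _ => (mul_div_cancel₀ _ (hq y).ne').symm
  have hterm : ∀ y, q y * (A y ^ α⁻¹ / q y) ^ α = A y / q y ^ (α - 1) := fun y => by
    rw [Real.div_rpow (Real.rpow_nonneg (hA y) _) (hq y).le, Real.rpow_inv_rpow (hA y) hα0,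
      Real.rpow_sub_one (hq y).ne']
    field_simp
  calc (∑ y, A y ^ α⁻¹) ^ α = (∑ y, q y * (A y ^ α⁻¹ / q y)) ^ α := by rw [hmean]
    _ ≤ ∑ y, q y * (A y ^ α⁻¹ / q y) ^ α :=
      Real.rpow_arith_mean_le_arith_mean_rpow _ _ _ (fun y _ => (hq y).le) hq1
        (fun y _ => div_nonneg (Real.rpow_nonneg (hA y) _) (hq y).le) hα
    _ = ∑ y, A y / q y ^ (α - 1) := Finset.sum_congr rfl fun y _ => hterm y

theorem sum_rpow_sum_rpow_inv_pos {α : ℝ} {A : X → B → ℝ} (hA : ∀ x y, 0 ≤ A x y)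
    (hsum : 0 < ∑ x, ∑ y, A x y) : 0 < ∑ x, (∑ y, A x y ^ α⁻¹) ^ α := by
  obtain ⟨x, -, hx⟩ := Finset.exists_lt_of_sum_lt (s := Finset.univ) (f := fun _ => (0 : ℝ))
    (by simpa using hsum)
  obtain ⟨y, -, hy⟩ := Finset.exists_lt_of_sum_lt (s := Finset.univ) (f := fun _ => (0 : ℝ))
    (by simpa using hx)
  have hinner_nonneg : ∀ x, 0 ≤ ∑ y, A x y ^ α⁻¹ :=
    fun x => Finset.sum_nonneg fun y _ => Real.rpow_nonneg (hA x y) _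
  refine Finset.sum_pos' (fun x _ => Real.rpow_nonneg (hinner_nonneg x) _)
    ⟨x, Finset.mem_univ x, Real.rpow_pos_of_pos ?_ _⟩
  exact Finset.sum_pos' (fun y _ => Real.rpow_nonneg (hA x y) _)
    ⟨y, Finset.mem_univ y, Real.rpow_pos_of_pos hy _⟩

theorem integral_sum_sum {Ω : Type*} [MeasurableSpace Ω] {μ : Measure Ω}
    {f : X → B → Ω → ℝ} (hf : ∀ x y, Integrable (f x y) μ) :
    ∫ ω, ∑ x, ∑ y, f x y ω ∂μ = ∑ x, ∑ y, ∫ ω, f x y ω ∂μ := by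
  rw [integral_finsetSum _ fun x _ => integrable_finsetSum _ fun y _ => hf x y]
  exact Finset.sum_congr rfl fun x _ => integral_finsetSum _ fun y _ => hf x y

end FiniteSums

section SourceClass

variable {Θ B : Type*} {p : Θ → B → ℝ} {n : ℕ}

theorem prodP_nonneg {θ : Θ} (hp : ∀ y, 0 ≤ p θ y) (x : Fin n → B) : 0 ≤ prodP p n θ x :=
  Finset.prod_nonneg fun i _ => hp (x i)

variable [Fintype B]

theorem sum_prodP (p : Θ → B → ℝ) (n : ℕ) (θ : Θ) :
    ∑ x, prodP p n θ x = (∑ y, p θ y) ^ n := by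
  simp [prodP, ← Fintype.prod_sum]

theorem prodP_le_one {θ : Θ} (hp : IsPMF (p θ)) (x : Fin n → B) : prodP p n θ x ≤ 1 :=
  Finset.prod_le_one (fun i _ => hp.1 (x i)) fun i _ => hp.le_one (x i)

theorem sum_prodP_mul_sum_mul_div_rpow {θ : Θ} (hp : ∀ y, 0 ≤ p θ y)
    {phat : (Fin n → B) → B → ℝ} (hphat : ∀ x y, 0 ≤ phat x y) {α : ℝ} (hα : α ≠ 0) :
    ∑ x, prodP p n θ x * ∑ y, p θ y * (p θ y / phat x y) ^ (α - 1) =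
      ∑ x, ∑ y, prodP p n θ x * p θ y ^ α / phat x y ^ (α - 1) := by
  simp_rw [Finset.mul_sum, mul_div_rpow_sub_one (hp _) (hphat _ _) hα, mul_div_assoc]

variable [MeasurableSpace Θ] {w : Measure Θ}

theorem integrable_prodP_mul_rpow [IsFiniteMeasure w] (hp : ∀ θ, IsPMF (p θ))
    (hmeas : ∀ z, Measurable fun θ => p θ z) {α : ℝ} (hα : 0 ≤ α) (x : Fin n → B) (y : B) :
    Integrable (fun θ => prodP p n θ x * p θ y ^ α) w := by
  have hmeas_prodP : Measurable fun θ => prodP p n θ x :=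
    Finset.measurable_prod _ fun i _ => hmeas (x i)
  refine Integrable.of_bound
    (hmeas_prodP.mul ((hmeas y).pow_const α)).aestronglyMeasurable 1 (ae_of_all _ fun θ => ?_)
  have hpy := (hp θ).1 y
  have hprod := prodP_nonneg (hp θ).1 x
  rw [Real.norm_of_nonneg (by positivity)]
  exact mul_le_one₀ (prodP_le_one (hp θ) x) (by positivity)
    (Real.rpow_le_one hpy ((hp θ).le_one y) hα)

theorem sum_sum_integral_prodP_mul_rpow_pos [IsProbabilityMeasure w] (hp : ∀ θ, IsPMF (p θ))
    (hmeas : ∀ z, Measurable fun θ => p θ z) {α : ℝ} (hα : 0 ≤ α) :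
    0 < ∑ x, ∑ y, ∫ θ, prodP p n θ x * p θ y ^ α ∂w := by
  have hint := integrable_prodP_mul_rpow (n := n) (w := w) hp hmeas hα
  have hmarginal :
      (fun θ => ∑ x, ∑ y, prodP p n θ x * p θ y ^ α) = fun θ => ∑ y, p θ y ^ α :=
    funext fun θ => by rw [← Finset.sum_mul_sum, sum_prodP, (hp θ).2, one_pow, one_mul]
  have hpos : ∀ θ, 0 < ∑ y, p θ y ^ α := fun θ =>
    have ⟨y, hy⟩ := (hp θ).exists_pos
    Finset.sum_pos' (fun y _ => Real.rpow_nonneg ((hp θ).1 y) _)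
      ⟨y, Finset.mem_univ y, Real.rpow_pos_of_pos hy _⟩
  have hint_marginal : Integrable (fun θ => ∑ y, p θ y ^ α) w :=
    hmarginal ▸ integrable_finsetSum _ fun x _ => integrable_finsetSum _ fun y _ => hint x y
  rw [← integral_sum_sum hint, hmarginal,
    integral_pos_iff_support_of_nonneg (fun θ => (hpos θ).le) hint_marginal,
    Function.support_eq_univ fun θ => (hpos θ).ne']
  simp

end SourceClass

theorem minimax_alphaRegret_ge_sibson_capacity_general
    {𝒳 Θ : Type*} [Fintype 𝒳] [MeasurableSpace Θ]
    (ℓ n : ℕ) (α : ℝ) (hα : 1 < α)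
    (p : Θ → (Fin ℓ → 𝒳) → ℝ)
    (hp : ∀ θ, IsPMF (p θ))
    (hmeas : ∀ z : Fin ℓ → 𝒳, Measurable fun θ => p θ z)
    (phat : (Fin n → Fin ℓ → 𝒳) → (Fin ℓ → 𝒳) → ℝ)
    (hphat : ∀ x, IsPMF (phat x))
    (hpos : ∀ x y, 0 < phat x y)
    (w : Measure Θ) [IsProbabilityMeasure w]
    (C : ℝ) (hC : ∀ θ : Θ, alphaRegret α p n phat θ ≤ C) :
    sibsonMI α p n w ≤ C := by
  have hα1 : 0 < α - 1 := sub_pos.2 hα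
  have hint := integrable_prodP_mul_rpow (n := n) (w := w) hp hmeas (by linarith : (0 : ℝ) ≤ α)
  set A : (Fin n → Fin ℓ → 𝒳) → (Fin ℓ → 𝒳) → ℝ :=
    fun x y => ∫ θ, prodP p n θ x * p θ y ^ α ∂w with hA_def
  have hA : ∀ x y, 0 ≤ A x y := fun x y => integral_nonneg fun θ =>
    mul_nonneg (prodP_nonneg (hp θ).1 x) (Real.rpow_nonneg ((hp θ).1 y) _)
  have hregret : ∀ θ, ∑ x, ∑ y, prodP p n θ x * p θ y ^ α / phat x y ^ (α - 1) ≤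
      Real.exp ((α - 1) * C) := fun θ =>
    sum_prodP_mul_sum_mul_div_rpow (hp θ).1 (fun x y => (hpos x y).le) (by linarith) ▸
      le_exp_of_inv_mul_log_le hα1 (hC θ)
  have haverage : ∑ x, ∑ y, A x y / phat x y ^ (α - 1) ≤ Real.exp ((α - 1) * C) := by
    simp_rw [hA_def, ← integral_div]
    rw [← integral_sum_sum fun x y => (hint x y).div_const _]
    refine (integral_mono ?_ (integrable_const _) hregret).trans_eq (by simp)
    exact integrable_finsetSum _ fun x _ =>
      integrable_finsetSum _ fun y _ => (hint x y).div_const _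
  have hS_pos : 0 < ∑ x, (∑ y, A x y ^ α⁻¹) ^ α :=
    sum_rpow_sum_rpow_inv_pos hA (sum_sum_integral_prodP_mul_rpow_pos hp hmeas (by linarith))
  refine inv_mul_log_le_of_le_exp hα1 hS_pos ((Finset.sum_le_sum fun x _ => ?_).trans haverage)
  exact rpow_sum_rpow_inv_le_sum_div_rpow hα.le (hA x) (hpos x) (hphat x).2

/-- For `α > 1`, the minimax batch `α`-regret is bounded below by the
conditional Sibson capacity: for every (everywhere positive) batch predictor `p̂` and every
prior probability measure `w`, `sup_{θ∈Θ} R_α(p̂,θ) ≥ I_α^w(θ,Y|X^n)` (stated via upper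
bounds: any upper bound `C` of `θ ↦ R_α(p̂,θ)` satisfies `C ≥ I_α^w(θ,Y|X^n)`). -/
theorem minimax_alphaRegret_ge_sibson_capacity
    {𝒳 Θ : Type*} [Fintype 𝒳] [Nonempty 𝒳] [MeasurableSpace Θ]
    (ℓ n : ℕ) (hℓ : 0 < ℓ) (hn : 0 < n) (α : ℝ) (hα : 1 < α)
    (p : Θ → (Fin ℓ → 𝒳) → ℝ)
    (hp : ∀ θ, IsPMF (p θ))
    (hmeas : ∀ z : Fin ℓ → 𝒳, Measurable fun θ => p θ z)
    (phat : (Fin n → Fin ℓ → 𝒳) → (Fin ℓ → 𝒳) → ℝ)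
    (hphat : ∀ x, IsPMF (phat x))
    (hpos : ∀ x y, 0 < phat x y)
    (w : Measure Θ) [IsProbabilityMeasure w]
    (C : ℝ) (hC : ∀ θ : Θ, alphaRegret α p n phat θ ≤ C) :
    sibsonMI α p n w ≤ C :=
  minimax_alphaRegret_ge_sibson_capacity_general ℓ n α hα p hp hmeas phat hphat hpos w C hC
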